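/- arXiv:1604.05954 — 4 statements merged into one kernel-verified Lean document; each statement's English description precedes it below -/
import Mathlib

section
/- Let l_1, …, l_n be primitive vectors of ℤ^r that span ℝ^r, and let τ ⊆ Sym_r(ℝ) be the cone of all nonnegative real combinations of the rank-one matrices l_1 l_1ᵀ, …, l_n l_nᵀ (so τ contains positive definite matrices). Then: (a) there is a subset S ⊆ {1,…,n} such that {l_i : i ∈ S} spans a linear subspace H of dimension exactly r−1; and (b) for any such hyperplane H, the subcone τ_H of τ generated by {l_i l_iᵀ : l_i ∈ H} is an extreme subset (face) of τ, equals {B ∈ τ : Bu = 0} where u is any nonzero vector orthogonal to H, consists entirely of matrices of rank at most r−1, and contains a matrix of rank exactly r−1. -/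
/-!
Every matrix of `τ` is positive semidefinite, so for `u ≠ 0` orthogonal to `H` the linear
functional `B ↦ uᵀ B u` is nonnegative on `τ`, and it vanishes exactly where `B u = 0`; its zero
set is therefore a face of `τ`. Since `uᵀ (∑ cᵢ lᵢ lᵢᵀ) u = ∑ cᵢ (lᵢ ⬝ u)²` and `H = u^⊥`, this
face is `τ_H`. Every `B ∈ τ_H` maps into `H`, and `∑_{i ∈ S} lᵢ lᵢᵀ = AᵀA`, where the rows of `A`
are the `lᵢ` spanning `H`, has rank `dim H = r - 1`. For (a), drop one vector from a basis of
`ℝ^r` chosen among the `lᵢ`.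
-/

open Matrix

noncomputable section

def castVec {k : Type*} (v : k → ℤ) : k → ℝ := fun i => (v i : ℝ)

def rankOne {k : Type*} (v : k → ℤ) : Matrix k k ℝ :=
  vecMulVec (castVec v) (castVec v)

def IsPrimitiveVec {k : Type*} [Fintype k] (v : k → ℤ) : Prop :=
  Finset.univ.gcd v = 1

open Module Submodule

section RankOneSums

variable {ι m R : Type*} [Fintype ι] [Fintype m]

theorem Matrix.sum_smul_vecMulVec_self_mulVec [CommSemiring R] (c : ι → R) (v : ι → m → R)
    (u : m → R) :
    (∑ i, c i • vecMulVec (v i) (v i)) *ᵥ u = ∑ i, (c i * (v i ⬝ᵥ u)) • v i := by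
  simp only [sum_mulVec, smul_mulVec, vecMulVec_mulVec, op_smul_eq_smul, smul_smul]

theorem Matrix.dotProduct_sum_smul_vecMulVec_self_mulVec [CommSemiring R] (c : ι → R)
    (v : ι → m → R) (u : m → R) :
    u ⬝ᵥ ((∑ i, c i • vecMulVec (v i) (v i)) *ᵥ u) = ∑ i, c i * (v i ⬝ᵥ u) ^ 2 := by
  simp only [sum_smul_vecMulVec_self_mulVec, dotProduct_sum, dotProduct_smul, smul_eq_mul]
  exact Finset.sum_congr rfl fun i _ => by rw [dotProduct_comm u]; ring

theorem Matrix.sum_smul_vecMulVec_self_mulVec_eq_zero_iff [Field R] [LinearOrder R]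
    [IsStrictOrderedRing R] {c : ι → R} (hc : 0 ≤ c) (v : ι → m → R) (u : m → R) :
    (∑ i, c i • vecMulVec (v i) (v i)) *ᵥ u = 0 ↔ ∀ i, v i ⬝ᵥ u ≠ 0 → c i = 0 := by
  constructor
  · intro h i hi
    have hq : ∑ i, c i * (v i ⬝ᵥ u) ^ 2 = 0 := by
      rw [← dotProduct_sum_smul_vecMulVec_self_mulVec, h, dotProduct_zero]
    have := (Finset.sum_eq_zero_iff_of_nonneg fun j _ => mul_nonneg (hc j) (sq_nonneg _)).1 hq i
      (Finset.mem_univ i)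
    simpa [hi] using this
  · intro h
    rw [sum_smul_vecMulVec_self_mulVec]
    refine Finset.sum_eq_zero fun i _ => ?_
    by_cases hi : v i ⬝ᵥ u = 0 <;> simp [hi, h]

theorem Matrix.exists_sum_smul_vecMulVec_self_supported_iff [Field R] [LinearOrder R]
    [IsStrictOrderedRing R] {v : ι → m → R} {H : Submodule R (m → R)} {u : m → R}
    (hH : ∀ x, x ∈ H ↔ u ⬝ᵥ x = 0) (B : Matrix m m R) :
    (∃ c : ι → R, (∀ i, 0 ≤ c i) ∧ (∀ i, v i ∉ H → c i = 0) ∧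
        B = ∑ i, c i • vecMulVec (v i) (v i)) ↔
      (∃ c : ι → R, (∀ i, 0 ≤ c i) ∧ B = ∑ i, c i • vecMulVec (v i) (v i)) ∧ B *ᵥ u = 0 := by
  have hH' : ∀ i, v i ∉ H ↔ v i ⬝ᵥ u ≠ 0 := fun i => by rw [hH, dotProduct_comm]
  simp only [hH']
  constructor
  · rintro ⟨c, hc, hcH, rfl⟩
    exact ⟨⟨c, hc, rfl⟩, (sum_smul_vecMulVec_self_mulVec_eq_zero_iff hc v u).2 hcH⟩
  · rintro ⟨⟨c, hc, rfl⟩, hBu⟩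
    exact ⟨c, hc, (sum_smul_vecMulVec_self_mulVec_eq_zero_iff hc v u).1 hBu, rfl⟩

theorem Matrix.rank_sum_smul_vecMulVec_self_le [Field R] {c : ι → R} {v : ι → m → R}
    {H : Submodule R (m → R)} (hc : ∀ i, v i ∉ H → c i = 0) :
    (∑ i, c i • vecMulVec (v i) (v i)).rank ≤ finrank R H := by
  refine Submodule.finrank_mono ?_
  rintro _ ⟨x, rfl⟩
  rw [mulVecLin_apply, sum_smul_vecMulVec_self_mulVec]
  refine sum_mem fun i _ => ?_
  by_cases hi : v i ∈ H
  · exact H.smul_mem _ hi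
  · simp [hc i hi]

theorem Matrix.rank_sum_vecMulVec_self [Field R] [LinearOrder R] [IsStrictOrderedRing R]
    (s : Finset ι) (v : ι → m → R) :
    (∑ i ∈ s, vecMulVec (v i) (v i)).rank = finrank R (span R (v '' s)) := by
  let A : Matrix s m R := of fun i => v i
  have hA : Aᵀ * A = ∑ i ∈ s, vecMulVec (v i) (v i) := by
    ext j k
    simp [A, mul_apply, vecMulVec, sum_apply, Finset.sum_attach s (fun i => v i j * v i k)]
  rw [← hA, rank_transpose_mul_self, rank_eq_finrank_span_row, Set.image_eq_range]
  rfl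

theorem Matrix.posSemidef_sum_smul_vecMulVec_self {c : ι → ℝ} (hc : 0 ≤ c) (v : ι → m → ℝ) :
    (∑ i, c i • vecMulVec (v i) (v i)).PosSemidef :=
  posSemidef_sum _ fun i _ => by simpa using (posSemidef_vecMulVec_self_star (v i)).smul (hc i)

end RankOneSums

theorem Matrix.isExtreme_setOf_mulVec_eq_zero {m : Type*} [Fintype m]
    {C : Set (Matrix m m ℝ)} (hC : ∀ B ∈ C, B.PosSemidef) (u : m → ℝ) :
    IsExtreme ℝ C {B | B ∈ C ∧ B *ᵥ u = 0} := by
  refine ⟨fun B hB => hB.1, ?_⟩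
  rintro x hx y hy z ⟨-, hzu⟩ ⟨a, b, ha, hb, -, rfl⟩
  have hqx := (hC x hx).dotProduct_mulVec_nonneg u
  have hqy := (hC y hy).dotProduct_mulVec_nonneg u
  rw [star_trivial] at hqx hqy
  have hq : a * (u ⬝ᵥ x *ᵥ u) + b * (u ⬝ᵥ y *ᵥ u) = 0 := by
    simpa [add_mulVec, smul_mulVec, dotProduct_add, dotProduct_smul] using congrArg (u ⬝ᵥ ·) hzu
  refine ⟨hx, ((hC x hx).dotProduct_mulVec_zero_iff u).1 ?_⟩
  rw [star_trivial]
  nlinarith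

section Hyperplanes

variable {K m : Type*} [Field K] [Fintype m]

theorem Submodule.exists_dotProduct_eq_zero_of_ne_top {H : Submodule K (m → K)}
    (hH : H ≠ ⊤) : ∃ u ≠ 0, ∀ x ∈ H, u ⬝ᵥ x = 0 := by
  classical
  obtain ⟨f, hf, hHf⟩ := exists_dual_map_eq_bot_of_lt_top hH.lt_top inferInstance
  let u : m → K := fun i => f (Pi.single i 1)
  have hfu : ∀ x, u ⬝ᵥ x = f x := fun x => by
    conv_rhs => rw [pi_eq_sum_univ' x]
    simp [u, dotProduct, mul_comm]
  refine ⟨u, fun h => hf (LinearMap.ext fun x => by rw [← hfu x, h, zero_dotProduct]; rfl),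
    fun x hx => ?_⟩
  rw [hfu]
  exact (Submodule.eq_bot_iff _).1 hHf _ (mem_map_of_mem hx)

theorem Submodule.mem_iff_dotProduct_eq_zero_of_finrank_eq {H : Submodule K (m → K)} {u : m → K}
    (hH : finrank K H = Fintype.card m - 1) (hu : u ≠ 0) (huH : ∀ x ∈ H, u ⬝ᵥ x = 0)
    (x : m → K) : x ∈ H ↔ u ⬝ᵥ x = 0 := by
  classical
  let L := LinearMap.ker (dotProductBilin K K u)
  have hHL : H ≤ L := huH
  have hL : L ≠ ⊤ := by
    obtain ⟨i, hi⟩ := Function.ne_iff.1 hu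
    intro h
    have : Pi.single i 1 ∈ L := h ▸ Submodule.mem_top
    exact hi (by simpa [L] using this)
  have := Submodule.finrank_lt hL
  rw [finrank_fintype_fun_eq_card] at this
  rw [Submodule.eq_of_le_of_finrank_le hHL (by omega)]
  simp [L]

end Hyperplanes

theorem exists_finset_finrank_span_image_eq {K V ι : Type*} [DivisionRing K] [AddCommGroup V]
    [Module K V] [Finite ι] (v : ι → V) {k : ℕ} (hk : k ≤ finrank K (span K (Set.range v))) :
    ∃ S : Finset ι, finrank K (span K (v '' S)) = k := by
  have hcard : ∀ S : Finset ι, LinearIndepOn K v ↑S → finrank K (span K (v '' S)) = S.card :=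
    fun S hS => by rw [Set.image_eq_range, finrank_span_eq_card hS]; simp
  obtain ⟨b, -, -, hvb, hb⟩ :=
    exists_linearIndepOn_extension (linearIndepOn_empty K v) (Set.empty_subset Set.univ)
  lift b to Finset ι using b.toFinite
  have hspan : span K (v '' b) = span K (Set.range v) :=
    le_antisymm (span_mono (Set.image_subset_range _ _)) (span_le.2 (by simpa using hvb))
  obtain ⟨S, hSb, rfl⟩ := Finset.exists_subset_card_eq (hk.trans_eq (by rw [← hspan, hcard b hb]))
  exact ⟨S, hcard S (hb.mono (Finset.coe_subset.2 hSb))⟩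

theorem face_of_rankOne_cone_general (r n : ℕ) (l : Fin n → (Fin r → ℤ))
    (hspan : Submodule.span ℝ (Set.range fun i => castVec (l i)) = ⊤)
    (τ : Set (Matrix (Fin r) (Fin r) ℝ))
    (hτ : τ = {B | ∃ c : Fin n → ℝ, (∀ i, 0 ≤ c i) ∧ B = ∑ i, c i • rankOne (l i)}) :
    (∃ S : Finset (Fin n),
      Module.finrank ℝ (Submodule.span ℝ ((fun i => castVec (l i)) '' ↑S)) = r - 1) ∧
    (∀ H : Submodule ℝ (Fin r → ℝ),
      (∃ S : Finset (Fin n), Submodule.span ℝ ((fun i => castVec (l i)) '' ↑S) = H) →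
      Module.finrank ℝ H = r - 1 →
      ∀ τH : Set (Matrix (Fin r) (Fin r) ℝ),
        τH = {B | ∃ c : Fin n → ℝ, (∀ i, 0 ≤ c i) ∧
                (∀ i, castVec (l i) ∉ H → c i = 0) ∧ B = ∑ i, c i • rankOne (l i)} →
        IsExtreme ℝ τ τH ∧
        (∀ u : Fin r → ℝ, u ≠ 0 → (∀ x ∈ H, u ⬝ᵥ x = 0) →
          τH = {B | B ∈ τ ∧ B *ᵥ u = 0}) ∧
        (∀ B ∈ τH, B.rank ≤ r - 1) ∧
        (∃ B ∈ τH, B.rank = r - 1)) := by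
  refine ⟨exists_finset_finrank_span_image_eq _
    (by rw [hspan, finrank_top, finrank_fin_fun]; omega), ?_⟩
  rintro H ⟨S, hS⟩ hH τH hτH
  have hface : ∀ u : Fin r → ℝ, u ≠ 0 → (∀ x ∈ H, u ⬝ᵥ x = 0) →
      τH = {B | B ∈ τ ∧ B *ᵥ u = 0} := fun u hu huH => by
    ext B
    rw [hτH, hτ]
    exact exists_sum_smul_vecMulVec_self_supported_iff
      (mem_iff_dotProduct_eq_zero_of_finrank_eq (by rw [hH, Fintype.card_fin]) hu huH) B
  refine ⟨?_, hface, ?_, ?_⟩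
  · by_cases hHtop : H = ⊤
    · have : τH = τ := by simp [hτH, hτ, hHtop]
      exact this ▸ IsExtreme.refl ℝ τ
    · obtain ⟨u, hu, huH⟩ := exists_dotProduct_eq_zero_of_ne_top hHtop
      rw [hface u hu huH]
      refine isExtreme_setOf_mulVec_eq_zero ?_ u
      rw [hτ]
      rintro _ ⟨c, hc, rfl⟩
      exact posSemidef_sum_smul_vecMulVec_self hc _
  · rw [hτH]
    rintro _ ⟨c, -, hcH, rfl⟩
    exact hH ▸ rank_sum_smul_vecMulVec_self_le hcH
  · rw [hτH]
    refine ⟨∑ i ∈ S, rankOne (l i), ⟨fun i => if i ∈ S then 1 else 0, fun i => by positivity,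
      fun i hi => if_neg fun hiS => hi (hS ▸ subset_span (Set.mem_image_of_mem _ hiS)), ?_⟩, ?_⟩
    · simp [ite_smul, Finset.sum_ite_mem]
    · rw [← hH, ← hS]
      exact rank_sum_vecMulVec_self S _

theorem face_of_rankOne_cone (r n : ℕ) (l : Fin n → (Fin r → ℤ))
    (hprim : ∀ i, IsPrimitiveVec (l i))
    (hspan : Submodule.span ℝ (Set.range fun i => castVec (l i)) = ⊤)
    (τ : Set (Matrix (Fin r) (Fin r) ℝ))
    (hτ : τ = {B | ∃ c : Fin n → ℝ, (∀ i, 0 ≤ c i) ∧ B = ∑ i, c i • rankOne (l i)}) :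
    (∃ S : Finset (Fin n),
      Module.finrank ℝ (Submodule.span ℝ ((fun i => castVec (l i)) '' ↑S)) = r - 1) ∧
    (∀ H : Submodule ℝ (Fin r → ℝ),
      (∃ S : Finset (Fin n), Submodule.span ℝ ((fun i => castVec (l i)) '' ↑S) = H) →
      Module.finrank ℝ H = r - 1 →
      ∀ τH : Set (Matrix (Fin r) (Fin r) ℝ),
        τH = {B | ∃ c : Fin n → ℝ, (∀ i, 0 ≤ c i) ∧
                (∀ i, castVec (l i) ∉ H → c i = 0) ∧ B = ∑ i, c i • rankOne (l i)} →
        IsExtreme ℝ τ τH ∧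
        (∀ u : Fin r → ℝ, u ≠ 0 → (∀ x ∈ H, u ⬝ᵥ x = 0) →
          τH = {B | B ∈ τ ∧ B *ᵥ u = 0}) ∧
        (∀ B ∈ τH, B.rank ≤ r - 1) ∧
        (∃ B ∈ τH, B.rank = r - 1)) :=
  face_of_rankOne_cone_general r n l hspan τ hτ
end
end

section
/- The Segre cubic threefold Σ ⊂ ℙ⁵(ℂ) defined by e_1 = e_3 = 0 has exactly 10 singular points: a point x ∈ ℂ⁶ \ {0} with e_1(x) = e_3(x) = 0 is a singular point of Σ (i.e., the 2×6 Jacobian matrix of (e_1, e_3) at x has rank at most 1) if and only if x is a nonzero scalar multiple of a coordinate permutation of (1,1,1,−1,−1,−1); up to scalar these form exactly 10 points of ℙ⁵(ℂ). -/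
/-!
Since `∂e₃/∂xᵢ = e₂ - xᵢ e₁ + xᵢ²`, on `e₁ = 0` the Jacobian has rows `(1, …, 1)` and
`(e₂ + xᵢ²)ᵢ`, so it has rank at most `1` exactly when all the `xᵢ²` agree, i.e. when `x` is a
multiple of a `±1`-vector; `e₁ = 0` then forces three signs of each kind. Conversely such a vector
satisfies `e₁ = e₃ = 0`: flipping all its signs permutes its coordinates, while `e₁` and `e₃` are
symmetric and homogeneous of odd degree. Each of these points of `ℙ⁵` has exactly one `±1`
representative with first coordinate `1`, so they correspond to the `C(5, 2) = 10` three-element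
subsets of `Fin 6` containing `0`.
-/

open MvPolynomial

noncomputable section

/-- The `k`-th elementary symmetric polynomial in six complex variables. -/
def e (k : ℕ) : MvPolynomial (Fin 6) ℂ := esymm (Fin 6) ℂ k

/-- The sign vector `(1,1,1,−1,−1,−1)`. -/
def sgn : Fin 6 → ℂ := ![1, 1, 1, -1, -1, -1]

/-- The `2 × 6` Jacobian matrix of `(e₁, e₃)` at `x`. -/
def jac (x : Fin 6 → ℂ) : Matrix (Fin 2) (Fin 6) ℂ :=
  Matrix.of fun a i => eval x (pderiv i (e (if a = 0 then 1 else 3)))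

open Finset
open scoped Pointwise

theorem Multiset.esymm_zero {R : Type*} [CommSemiring R] (s : Multiset R) : s.esymm 0 = 1 := by
  simp [Multiset.esymm]

theorem Multiset.esymm_cons {R : Type*} [CommSemiring R] (a : R) (s : Multiset R) (n : ℕ) :
    (a ::ₘ s).esymm (n + 1) = s.esymm (n + 1) + a * s.esymm n := by
  simp [Multiset.esymm, Multiset.powersetCard_cons, Multiset.sum_map_mul_left]

namespace MvPolynomial

variable {σ R : Type*} [CommRing R]

theorem pderiv_esymm_map_X_of_notMem {i : σ} {s : Finset σ} (hi : i ∉ s) (n : ℕ) :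
    pderiv i ((s.val.map X).esymm n : MvPolynomial σ R) = 0 := by
  rw [Finset.esymm_map_val, map_sum]
  refine sum_eq_zero fun t ht => prod_induction _ (fun p => pderiv i p = 0)
    (fun p q hp hq => by simp [hp, hq]) pderiv_one fun j hj => pderiv_X_of_ne ?_
  rintro rfl
  exact hi ((mem_powersetCard.1 ht).1 hj)

variable [Fintype σ]

theorem eval_smul_esymm (c : R) (x : σ → R) (n : ℕ) :
    eval (c • x) (esymm σ R n) = c ^ n * eval x (esymm σ R n) := by
  change aeval (c • x) (esymm σ R n) = c ^ n * aeval x (esymm σ R n)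
  rw [aeval_esymm_eq_multiset_esymm, aeval_esymm_eq_multiset_esymm, ← smul_eq_mul,
    Multiset.pow_smul_esymm, Multiset.map_map]
  rfl

theorem eval_comp_perm_esymm (x : σ → R) (π : Equiv.Perm σ) (n : ℕ) :
    eval (x ∘ π) (esymm σ R n) = eval x (esymm σ R n) := by
  rw [← eval_rename, rename_esymm]

theorem eval_esymm_eq_zero_of_comp_perm_eq_neg [NoZeroDivisors R] [CharZero R] {x : σ → R}
    {π : Equiv.Perm σ} (hπ : x ∘ π = -x) {n : ℕ} (hn : Odd n) : eval x (esymm σ R n) = 0 := by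
  have h := eval_comp_perm_esymm x π n
  rw [hπ, ← neg_one_smul R x, eval_smul_esymm, hn.neg_one_pow, neg_one_mul] at h
  exact self_eq_neg.1 h.symm

variable [DecidableEq σ]

theorem esymm_succ_eq_esymm_erase (i : σ) (n : ℕ) :
    esymm σ R (n + 1) = ((univ.erase i).val.map X).esymm (n + 1) +
      X i * ((univ.erase i).val.map X).esymm n := by
  rw [esymm_eq_multiset_esymm, ← Multiset.cons_erase (mem_univ_val i), ← erase_val,
    Multiset.map_cons, Multiset.esymm_cons]

theorem pderiv_esymm_succ_eq_esymm_erase (i : σ) (n : ℕ) :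
    pderiv i (esymm σ R (n + 1)) = ((univ.erase i).val.map X).esymm n := by
  rw [esymm_succ_eq_esymm_erase i, map_add, pderiv_mul, pderiv_X_self,
    pderiv_esymm_map_X_of_notMem (notMem_erase i univ),
    pderiv_esymm_map_X_of_notMem (notMem_erase i univ)]
  ring

theorem esymm_erase_eq_sum (i : σ) (n : ℕ) :
    ((univ.erase i).val.map X).esymm n =
      ∑ k ∈ range (n + 1), (-X i) ^ k * esymm σ R (n - k) := by
  induction n with
  | zero => simp [Multiset.esymm_zero, esymm_zero]
  | succ n ih =>
    rw [sum_range_succ', eq_sub_of_add_eq (esymm_succ_eq_esymm_erase i n).symm, ih, mul_sum]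
    simp only [pow_succ, Nat.succ_sub_succ, pow_zero, one_mul, Nat.sub_zero]
    rw [sub_eq_add_neg, ← sum_neg_distrib, add_comm]
    exact congrArg₂ _ (sum_congr rfl fun k _ => by ring) rfl

theorem pderiv_esymm_succ (i : σ) (n : ℕ) :
    pderiv i (esymm σ R (n + 1)) = ∑ k ∈ range (n + 1), (-X i) ^ k * esymm σ R (n - k) := by
  rw [pderiv_esymm_succ_eq_esymm_erase, esymm_erase_eq_sum]

end MvPolynomial

theorem Matrix.rank_le_one_iff_exists_smul {n K : Type*} [Fintype n] [Field K]
    {M : Matrix (Fin 2) n K} (h0 : M 0 ≠ 0) : M.rank ≤ 1 ↔ ∃ a : K, a • M 0 = M 1 := by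
  have hrow : M.row = ![M 0, M 1] := by ext i : 1; fin_cases i <;> rfl
  have hle : M.rank ≤ 2 := by simpa using M.rank_le_card_height
  rw [← not_iff_not, not_exists, ← LinearIndependent.pair_iff' h0, ← hrow,
    linearIndependent_iff_card_eq_finrank_span, Fintype.card_fin, Set.finrank,
    ← M.rank_eq_finrank_span_row]
  omega

theorem Projectivization.mk_smul_eq_mk {K V : Type*} [DivisionRing K] [AddCommGroup V]
    [Module K V] (c : K) {v : V} (hv : v ≠ 0) (hcv : c • v ≠ 0) : mk K (c • v) hcv = mk K v hv :=
  (mk_eq_mk_iff' K _ _ _ _).2 ⟨c, rfl⟩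

section Signs

variable {α R : Type*} [DecidableEq α]

def signs [Ring R] (S : Finset α) (i : α) : R := if i ∈ S then 1 else -1

theorem exists_eq_smul_signs_of_sq_eq [Fintype α] [CommRing R] [NoZeroDivisors R] {x : α → R}
    (hsq : ∀ i j, x i ^ 2 = x j ^ 2) (i₀ : α) : ∃ S : Finset α, x = x i₀ • signs S := by
  classical
  refine ⟨univ.filter (x · = x i₀), funext fun i => ?_⟩
  by_cases h : x i = x i₀
  · simp [signs, h]
  · simp [signs, (sq_eq_sq_iff_eq_or_eq_neg.1 (hsq i i₀)).resolve_left h]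

variable [Ring R]

theorem sq_signs (S : Finset α) (i : α) : (signs S i : R) ^ 2 = 1 := by
  by_cases h : i ∈ S <;> simp [signs, h]

theorem signs_compl [Fintype α] (S : Finset α) : (signs Sᶜ : α → R) = -signs S := by
  ext i; by_cases h : i ∈ S <;> simp [signs, h]

theorem sum_signs [Fintype α] (S : Finset α) :
    ∑ i, (signs S i : R) = 2 * #S - Fintype.card α := by
  have h : ∀ i, (signs S i : R) = 2 * (if i ∈ S then 1 else 0) - 1 := by
    intro i; unfold signs; split_ifs <;> norm_num
  simp [h, sum_sub_distrib, Nat.cast_comm]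

theorem signs_ne_zero [Nonempty α] [Nontrivial R] (S : Finset α) : (signs S : α → R) ≠ 0 := by
  intro h
  obtain ⟨i⟩ := ‹Nonempty α›
  have hi := congrFun h i
  by_cases hiS : i ∈ S <;> simp [signs, hiS] at hi

theorem signs_injective [NeZero (2 : R)] : Function.Injective (signs : Finset α → α → R) := by
  have h : (1 : R) ≠ -1 := fun h =>
    two_ne_zero (one_add_one_eq_two.symm.trans ((congrArg (· + 1) h).trans (neg_add_cancel 1)))
  intro S T hST
  ext i
  have hi := congrFun hST i
  by_cases hS : i ∈ S <;> by_cases hT : i ∈ T <;> simp [signs, hS, hT, h, h.symm] at hi ⊢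

theorem signs_comp_perm (S : Finset α) (π : Equiv.Perm α) :
    (signs S : α → R) ∘ π = signs (π⁻¹ • S) := by
  ext i
  simp only [Function.comp_apply, signs, mem_inv_smul_finset_iff, Equiv.Perm.smul_def]

theorem exists_perm_signs_comp_eq {S T : Finset α} (h : #S = #T) :
    ∃ π : Equiv.Perm α, (signs T : α → R) ∘ π = signs S := by
  obtain ⟨π, hπ⟩ := (Set.powersetCard.isPretransitive (n := #T)).exists_smul_eq ⟨S, h⟩ ⟨T, rfl⟩
  have hπ : π • S = T := congrArg Subtype.val hπ
  exact ⟨π, by rw [signs_comp_perm, ← hπ, inv_smul_smul]⟩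

theorem two_mul_card_eq_of_sum_smul_signs_eq_zero [Fintype α] [NoZeroDivisors R] [CharZero R]
    {c : R} (hc : c ≠ 0) {S : Finset α} (h : ∑ i, (c • signs S : α → R) i = 0) :
    2 * #S = Fintype.card α := by
  simp only [Pi.smul_apply, smul_eq_mul, ← mul_sum, sum_signs, mul_eq_zero, hc, false_or,
    sub_eq_zero] at h
  exact_mod_cast h

end Signs

theorem mk_signs_injOn {α K : Type*} [DecidableEq α] [Nonempty α] [Field K] [NeZero (2 : K)]
    (a : α) :
    Set.InjOn (fun S : Finset α => Projectivization.mk K (signs S : α → K) (signs_ne_zero S))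
      {S | a ∈ S} := by
  intro S hS T hT hST
  obtain ⟨c, hc⟩ := (Projectivization.mk_eq_mk_iff' K _ _ _ _).1 hST
  have hc1 : c = 1 := by
    simpa [signs, show a ∈ S from hS, show a ∈ T from hT] using congrFun hc a
  rw [hc1, one_smul] at hc
  exact signs_injective hc.symm

theorem sgn_eq_signs : sgn = signs {0, 1, 2} := by
  funext i; fin_cases i <;> simp [sgn, signs]

theorem sgn_comp_addRight_three : sgn ∘ Equiv.addRight 3 = -sgn := by
  funext i; fin_cases i <;> simp [sgn]

theorem eval_e_one (x : Fin 6 → ℂ) : eval x (e 1) = ∑ i, x i := by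
  simp [e, esymm_one]

theorem eval_e_smul_sgn_comp_perm (c : ℂ) (π : Equiv.Perm (Fin 6)) (k : ℕ) :
    eval (fun i => c * sgn (π i)) (e k) = c ^ k * eval sgn (e k) :=
  (eval_smul_esymm c (sgn ∘ π) k).trans (by rw [eval_comp_perm_esymm]; rfl)

theorem eval_sgn_e_of_odd {k : ℕ} (hk : Odd k) : eval sgn (e k) = 0 :=
  eval_esymm_eq_zero_of_comp_perm_eq_neg sgn_comp_addRight_three hk

theorem jac_zero (x : Fin 6 → ℂ) : jac x 0 = 1 := by
  ext i
  simp [jac, e]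

theorem jac_one (x : Fin 6 → ℂ) (i : Fin 6) :
    jac x 1 i = eval x (e 2) - x i * eval x (e 1) + x i ^ 2 := by
  change eval x (pderiv i (esymm (Fin 6) ℂ (2 + 1))) = _
  simp only [pderiv_esymm_succ, sum_range_succ, sum_range_zero, zero_add, Nat.reduceSub, esymm_zero,
    map_add, map_mul, map_pow, map_neg, map_one, eval_X, e]
  ring

theorem rank_jac_le_one_iff {x : Fin 6 → ℂ} (h1 : eval x (e 1) = 0) :
    (jac x).rank ≤ 1 ↔ ∀ i j, x i ^ 2 = x j ^ 2 := by
  rw [Matrix.rank_le_one_iff_exists_smul (by simp [jac_zero]), jac_zero]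
  constructor
  · rintro ⟨a, ha⟩ i j
    have hi := congrFun ha i
    have hj := congrFun ha j
    simp only [Pi.smul_apply, Pi.one_apply, smul_eq_mul, mul_one, jac_one, h1] at hi hj
    linear_combination hj - hi
  · intro hsq
    refine ⟨eval x (e 2) + x 0 ^ 2, funext fun i => ?_⟩
    simp [jac_one, h1, hsq i 0]

theorem exists_smul_sgn_perm_iff (x : Fin 6 → ℂ) :
    (∃ (c : ℂ) (π : Equiv.Perm (Fin 6)), c ≠ 0 ∧ x = fun i => c * sgn (π i)) ↔
      ∃ (c : ℂ) (S : Finset (Fin 6)), c ≠ 0 ∧ #S = 3 ∧ x = c • signs S := by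
  constructor
  · rintro ⟨c, π, hc, rfl⟩
    refine ⟨c, π⁻¹ • {0, 1, 2}, hc, by rw [card_smul_finset]; rfl, ?_⟩
    rw [← signs_comp_perm, ← sgn_eq_signs]
    rfl
  · rintro ⟨c, S, hc, hS, rfl⟩
    obtain ⟨π, hπ⟩ := exists_perm_signs_comp_eq (R := ℂ) (T := {0, 1, 2}) (hS.trans rfl)
    refine ⟨c, π, hc, ?_⟩
    rw [← hπ, ← sgn_eq_signs]
    rfl

theorem singular_iff_exists_smul_sgn_perm {x : Fin 6 → ℂ} (hx : x ≠ 0) :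
    (eval x (e 1) = 0 ∧ eval x (e 3) = 0 ∧ (jac x).rank ≤ 1) ↔
      ∃ (c : ℂ) (π : Equiv.Perm (Fin 6)), c ≠ 0 ∧ x = fun i => c * sgn (π i) := by
  constructor
  · rintro ⟨h1, -, hr⟩
    obtain ⟨i₀, hi₀⟩ := Function.ne_iff.1 hx
    obtain ⟨S, hS⟩ := exists_eq_smul_signs_of_sq_eq ((rank_jac_le_one_iff h1).1 hr) i₀
    have hsum : ∑ i, (x i₀ • signs S : Fin 6 → ℂ) i = 0 := by rw [← hS, ← eval_e_one, h1]
    have hcard : 2 * #S = 6 := two_mul_card_eq_of_sum_smul_signs_eq_zero hi₀ hsum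
    exact (exists_smul_sgn_perm_iff x).2 ⟨x i₀, S, hi₀, by omega, hS⟩
  · rintro ⟨c, π, hc, rfl⟩
    have h1 : eval (fun i => c * sgn (π i)) (e 1) = 0 := by
      rw [eval_e_smul_sgn_comp_perm, eval_sgn_e_of_odd odd_one, mul_zero]
    refine ⟨h1, ?_, (rank_jac_le_one_iff h1).2 fun i j => ?_⟩
    · rw [eval_e_smul_sgn_comp_perm, eval_sgn_e_of_odd (by decide), mul_zero]
    · simp [mul_pow, sgn_eq_signs, sq_signs]

theorem setOf_nodes_eq_image :
    {P : Projectivization ℂ (Fin 6 → ℂ) | ∃ (x : Fin 6 → ℂ) (hx : x ≠ 0),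
      P = Projectivization.mk ℂ x hx ∧
        ∃ (c : ℂ) (π : Equiv.Perm (Fin 6)), c ≠ 0 ∧ x = fun i => c * sgn (π i)} =
      (fun S => Projectivization.mk ℂ (signs S) (signs_ne_zero S)) '' {S | #S = 3 ∧ 0 ∈ S} := by
  ext P
  simp only [exists_smul_sgn_perm_iff, Set.mem_ofPred_eq, Set.mem_image]
  constructor
  · rintro ⟨x, hx, rfl, c, S, hc, hS, rfl⟩
    rw [Projectivization.mk_smul_eq_mk c (signs_ne_zero S)]
    by_cases h0 : 0 ∈ S
    · exact ⟨S, ⟨hS, h0⟩, rfl⟩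
    · refine ⟨Sᶜ, ⟨by rw [card_compl, hS]; rfl, mem_compl.2 h0⟩, ?_⟩
      simp only [signs_compl, ← neg_one_smul ℂ (signs S : Fin 6 → ℂ)]
      exact Projectivization.mk_smul_eq_mk _ _ _
  · rintro ⟨S, ⟨hS, -⟩, rfl⟩
    exact ⟨signs S, signs_ne_zero S, rfl, 1, S, one_ne_zero, hS, (one_smul _ _).symm⟩

theorem segre_cubic_ten_nodes :
    (∀ x : Fin 6 → ℂ, x ≠ 0 →
      ((eval x (e 1) = 0 ∧ eval x (e 3) = 0 ∧ (jac x).rank ≤ 1) ↔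
        ∃ (c : ℂ) (π : Equiv.Perm (Fin 6)), c ≠ 0 ∧ x = fun i => c * sgn (π i))) ∧
    Set.ncard {P : Projectivization ℂ (Fin 6 → ℂ) |
      ∃ (x : Fin 6 → ℂ) (hx : x ≠ 0), P = Projectivization.mk ℂ x hx ∧
        ∃ (c : ℂ) (π : Equiv.Perm (Fin 6)), c ≠ 0 ∧ x = fun i => c * sgn (π i)} = 10 := by
  refine ⟨fun x hx => singular_iff_exists_smul_sgn_perm hx, ?_⟩
  rw [setOf_nodes_eq_image, ((mk_signs_injOn (0 : Fin 6)).mono fun S hS => hS.2).ncard_image,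
    Set.ncard_eq_toFinset_card']
  decide
end
end

section
/- The Segre cubic threefold Σ ⊂ ℙ⁵(ℂ) contains exactly 15 planes: a 3-dimensional linear subspace W ⊆ ℂ⁶ satisfies e_1(x) = e_3(x) = 0 for all x ∈ W (i.e., ℙ(W) ⊆ Σ) if and only if W = {x ∈ ℂ⁶ : x_a + x_b = x_c + x_d = x_e + x_f = 0} for some partition {{a,b},{c,d},{e,f}} of {0,1,2,3,4,5} into three pairs; there are exactly 15 such subspaces. -/
/-!
Polarising, `∑ xᵢ³` vanishes on `W` iff the trilinear form `∑ xᵢ yᵢ zᵢ` does. Choose a set `I`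
of coordinates onto which `W` projects isomorphically; the trilinear form shows that the
complementary coordinates `J` have the same property. For `s ∈ I` let `b ∈ W` be the vector with
`b|_I = δ_s`, and for `j ∈ J` let `c_j ∈ W` have `c_j|_J = δ_j`. Evaluating the trilinear form on
`b, c_j, c_j'` gives `b_j = -(c_j)_s²` and `(c_j)_s (c_j')_s = 0` for `j ≠ j'`, so at most one
`b_j` is nonzero, and `∑ b = 0` forces `b = e_s - e_j`. Then `∑ b_k² x_k = x_s + x_j` vanishes on
`W`: the coordinates of `W` come in pairs `x_j = -x_s`, and a dimension count gives equality with
the pair subspace.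
-/

open MvPolynomial

noncomputable section

open Module Finset
open Function (Involutive Injective Bijective)

theorem eval_esymm_one_and_three_eq_zero_iff {σ K : Type*} [Fintype σ] [Field K]
    (h3 : (3 : K) ≠ 0) (x : σ → K) :
    eval x (esymm σ K 1) = 0 ∧ eval x (esymm σ K 3) = 0 ↔
      ∑ i, x i = 0 ∧ ∑ i, x i ^ 3 = 0 := by
  have hanti : (antidiagonal 3).filter (fun a : ℕ × ℕ => a.1 < 3) = {(0, 3), (1, 2), (2, 1)} := by
    decide
  have heval1 : eval x (esymm σ K 1) = ∑ i, x i := by simp [esymm_one]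
  have newton : 3 * eval x (esymm σ K 3) =
      ∑ i, x i ^ 3 - (∑ i, x i) * ∑ i, x i ^ 2 + eval x (esymm σ K 2) * ∑ i, x i := by
    simpa [hanti, psum, sub_eq_add_neg, add_assoc, (by norm_num : (-1 : K) ^ 4 = 1)]
      using congrArg (eval x) (mul_esymm_eq_sum σ K 3)
  rw [heval1]
  refine and_congr_right fun h1 => ?_
  rw [← mul_eq_zero_iff_left h3, newton, h1]
  simp

section

variable {K ι : Type*} [Field K]

def pairSubmodule (σ : Equiv.Perm ι) : Submodule K (ι → K) where
  carrier := {x | ∀ i, x i + x (σ i) = 0}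
  add_mem' hx hy i := by simp only [Pi.add_apply]; linear_combination hx i + hy i
  zero_mem' i := by simp
  smul_mem' c x hx i := by simp only [Pi.smul_apply, smul_eq_mul]; linear_combination c * hx i

theorem sum_pow_eq_zero_of_mem_pairSubmodule [Fintype ι] (h2 : (2 : K) ≠ 0)
    {σ : Equiv.Perm ι} {k : ℕ} (hk : Odd k) {x : ι → K} (hx : x ∈ pairSubmodule σ) :
    ∑ i, x i ^ k = 0 := by
  have hneg : ∑ i, x (σ i) ^ k = -∑ i, x i ^ k := by
    rw [← sum_neg_distrib]
    exact sum_congr rfl fun i _ => by rw [eq_neg_of_add_eq_zero_right (hx i), hk.neg_pow]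
  rw [Equiv.sum_comp σ (fun i => x i ^ k)] at hneg
  exact (mul_eq_zero.1 (by linear_combination hneg : (2 : K) * ∑ i, x i ^ k = 0)).resolve_left h2

theorem single_sub_single_mem_pairSubmodule [DecidableEq ι] {σ : Equiv.Perm ι}
    (hσ : Involutive σ) (hfix : ∀ i, σ i ≠ i) (i : ι) :
    Pi.single i 1 - Pi.single (σ i) 1 ∈ pairSubmodule (K := K) σ := by
  intro k
  by_cases hk : k = i
  · subst hk; simp [hfix k, (hfix k).symm]
  by_cases hk' : k = σ i
  · subst hk'; simp [hσ i, hfix i, (hfix i).symm]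
  · have : σ k ≠ i := fun h => hk' (by rw [← h, hσ])
    have : σ k ≠ σ i := fun h => hk (σ.injective h)
    simp [*]

theorem pairSubmodule_injOn [DecidableEq ι] :
    Set.InjOn (pairSubmodule (K := K) (ι := ι)) {σ | Involutive σ ∧ ∀ i, σ i ≠ i} := by
  rintro σ ⟨hσ, hσfix⟩ τ ⟨-, hτfix⟩ h
  ext i
  by_contra hne
  have := (h ▸ single_sub_single_mem_pairSubmodule hσ hσfix i : _ ∈ pairSubmodule τ) i
  simp [hτfix i, Ne.symm hne, Ne.symm (hσfix i)] at this

/-- The coordinates in `I` restrict to a basis of the dual of `W`. -/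
structure IsCoordFrame (W : Submodule K (ι → K)) (I : Finset ι) : Prop where
  eq_zero : ∀ x ∈ W, (∀ i ∈ I, x i = 0) → x = 0
  exists_mem : ∀ f : ι → K, ∃ x ∈ W, ∀ i ∈ I, x i = f i

def coordRestrict (W : Submodule K (ι → K)) (I : Finset ι) : W →ₗ[K] (I → K) :=
  LinearMap.funLeft K K ((↑) : I → ι) ∘ₗ W.subtype

variable {W : Submodule K (ι → K)} {I : Finset ι}

theorem isCoordFrame_iff_bijective : IsCoordFrame W I ↔ Bijective (coordRestrict W I) := by
  classical
  rw [Bijective, injective_iff_map_eq_zero]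
  refine ⟨fun h => ⟨fun x hx => ?_, fun g => ?_⟩,
    fun ⟨hinj, hsurj⟩ => ⟨fun x hx hxI => ?_, fun f => ?_⟩⟩
  · exact Subtype.ext (h.eq_zero x x.2 fun i hi => congrFun hx ⟨i, hi⟩)
  · obtain ⟨x, hx, hxI⟩ := h.exists_mem fun i => if hi : i ∈ I then g ⟨i, hi⟩ else 0
    exact ⟨⟨x, hx⟩, funext fun i => by simpa [coordRestrict] using hxI i i.2⟩
  · simpa using hinj ⟨x, hx⟩ (funext fun i => hxI i i.2)
  · obtain ⟨x, hx⟩ := hsurj fun i => f i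
    exact ⟨x, x.2, fun i hi => congrFun hx ⟨i, hi⟩⟩

theorem IsCoordFrame.card_eq_finrank (h : IsCoordFrame W I) : #I = finrank K W := by
  rw [(LinearEquiv.ofBijective _ (isCoordFrame_iff_bijective.1 h)).finrank_eq,
    finrank_fintype_fun_eq_card, Fintype.card_coe]

theorem IsCoordFrame.of_card_eq [Finite ι] (h : ∀ x ∈ W, (∀ i ∈ I, x i = 0) → x = 0)
    (hcard : #I = finrank K W) : IsCoordFrame W I := by
  have hinj : Injective (coordRestrict W I) := by
    rw [injective_iff_map_eq_zero]
    exact fun x hx => Subtype.ext (h x x.2 fun i hi => congrFun hx ⟨i, hi⟩)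
  rw [isCoordFrame_iff_bijective]
  refine ⟨hinj, (LinearMap.injective_iff_surjective_of_finrank_eq_finrank ?_).1 hinj⟩
  rw [finrank_fintype_fun_eq_card, Fintype.card_coe, hcard]

theorem IsCoordFrame.eq_of_forall_apply_eq [DecidableEq ι] (hI : IsCoordFrame W I) {i k : ι}
    (hi : i ∈ I) (hk : k ∈ I) (h : ∀ x ∈ W, x i = x k) : i = k := by
  obtain ⟨x, hx, hxI⟩ := hI.exists_mem (Pi.single i 1)
  by_contra hne
  have := h x hx
  rw [hxI i hi, hxI k hk] at this
  simp [Ne.symm hne] at this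

theorem exists_isCoordFrame [Fintype ι] (W : Submodule K (ι → K)) : ∃ I, IsCoordFrame W I := by
  classical
  obtain ⟨I, hI, hmin⟩ := exists_min_image
    {I : Finset ι | ∀ x ∈ W, (∀ i ∈ I, x i = 0) → x = 0} card
    ⟨univ, mem_filter.2 ⟨mem_univ _, fun x _ h => funext fun i => h i (mem_univ i)⟩⟩
  have hsep : ∀ x ∈ W, (∀ i ∈ I, x i = 0) → x = 0 := by simpa using hI
  -- a smallest separating set: dropping `s` lets some `x ∈ W` vanish on `I.erase s` but not at `s`
  have hdual : ∀ s ∈ I, ∃ b ∈ W, ∀ i ∈ I, b i = (Pi.single s 1 : ι → K) i := by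
    intro s hs
    obtain ⟨x, hx, hxI, hx0⟩ : ∃ x ∈ W, (∀ i ∈ I.erase s, x i = 0) ∧ x ≠ 0 := by
      by_contra! hsep'
      have := hmin (I.erase s) (by simpa using hsep')
      rw [card_erase_of_mem hs] at this
      have := card_pos.2 ⟨s, hs⟩
      omega
    have hxs : x s ≠ 0 := fun h => hx0 <| hsep x hx fun i hi =>
      if his : i = s then his ▸ h else hxI i (mem_erase.2 ⟨his, hi⟩)
    refine ⟨(x s)⁻¹ • x, W.smul_mem _ hx, fun i hi => ?_⟩
    by_cases his : i = s
    · subst his; simp [hxs]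
    · simp [his, hxI i (mem_erase.2 ⟨his, hi⟩)]
  choose! b hbW hbI using hdual
  refine ⟨I, hsep, fun f => ⟨∑ s ∈ I, f s • b s, W.sum_mem fun s hs => W.smul_mem _ (hbW s hs),
    fun i hi => ?_⟩⟩
  rw [Finset.sum_apply, sum_congr rfl fun s hs => by rw [Pi.smul_apply, hbI s hs i hi]]
  simp [Pi.single_apply, hi]

theorem finrank_pairSubmodule [Fintype ι] [DecidableEq ι] {σ : Equiv.Perm ι}
    (hσ : Involutive σ) (hfix : ∀ i, σ i ≠ i) :
    2 * finrank K (pairSubmodule (K := K) σ) = Fintype.card ι := by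
  obtain ⟨I, hI⟩ := exists_isCoordFrame (pairSubmodule (K := K) σ)
  have hside : ∀ i, σ i ∈ I ↔ i ∉ I := by
    refine fun i => ⟨fun hσi hi => ?_, fun hi => by_contra fun hσi => ?_⟩
    · obtain ⟨x, hx, hxI⟩ := hI.exists_mem (Pi.single i 1)
      have := hx i
      rw [hxI i hi, hxI _ hσi] at this
      simp [hfix i] at this
    · have := hI.eq_zero _ (single_sub_single_mem_pairSubmodule hσ hfix i) fun k hk => by
        simp [ne_of_mem_of_not_mem hk hi, ne_of_mem_of_not_mem hk hσi]
      simpa [Ne.symm (hfix i)] using congrFun this i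
  have hcard : #Iᶜ = #I := card_nbij' σ σ (fun i hi => by simpa [hside] using hi)
    (fun i hi => by simpa [hside] using hi) (fun i _ => hσ i) (fun i _ => hσ i)
  rw [← hI.card_eq_finrank, two_mul]
  nth_rewrite 2 [← hcard]
  exact card_add_card_compl I

def IsTrilinearIsotropic [Fintype ι] (W : Submodule K (ι → K)) : Prop :=
  ∀ x ∈ W, ∀ y ∈ W, ∀ z ∈ W, ∑ i, x i * y i * z i = 0

theorem IsTrilinearIsotropic.of_sum_pow_three [Fintype ι] (h6 : (6 : K) ≠ 0)
    (h : ∀ x ∈ W, ∑ i, x i ^ 3 = 0) : IsTrilinearIsotropic W := by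
  intro x hx y hy z hz
  have hpol : ∀ i, 6 * (x i * y i * z i) = (x + y + z) i ^ 3 - (x + y) i ^ 3 - (x + z) i ^ 3
      - (y + z) i ^ 3 + x i ^ 3 + y i ^ 3 + z i ^ 3 := fun i => by
    simp only [Pi.add_apply]; ring
  apply mul_left_cancel₀ h6
  simp only [mul_sum, hpol, sum_add_distrib, sum_sub_distrib, h _ hx, h _ hy, h _ hz,
    h _ (W.add_mem hx hy), h _ (W.add_mem hx hz), h _ (W.add_mem hy hz),
    h _ (W.add_mem (W.add_mem hx hy) hz)]
  ring

theorem IsCoordFrame.compl [Fintype ι] [DecidableEq ι] (hI : IsCoordFrame W I)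
    (hT : IsTrilinearIsotropic W) (hdim : 2 * finrank K W = Fintype.card ι) :
    IsCoordFrame W Iᶜ := by
  refine .of_card_eq (fun x hx hxJ => hI.eq_zero x hx fun s hs => ?_) ?_
  · -- with `y = 1` and `z = δ_s` on `I`, the trilinear form reads off `x s`
    obtain ⟨y, hy, hyI⟩ := hI.exists_mem 1
    obtain ⟨z, hz, hzI⟩ := hI.exists_mem (Pi.single s 1)
    have := hT x hx y hy z hz
    rw [← sum_add_sum_compl I, sum_eq_zero (s := Iᶜ) (fun i hi => by rw [hxJ i hi]; ring),
      add_zero, sum_congr rfl fun i hi => by rw [hyI i hi, hzI i hi]] at this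
    simpa [Pi.single_apply, hs] using this
  · rw [card_compl, hI.card_eq_finrank]; omega

theorem sum_mul_mul_eq_of_eq_single [Fintype ι] [DecidableEq ι] {b c c' : ι → K} {s j j' : ι}
    (hs : s ∈ I) (hj : j ∉ I) (hj' : j' ∉ I) (hb : ∀ i ∈ I, b i = (Pi.single s 1 : ι → K) i)
    (hc : ∀ i ∉ I, c i = (Pi.single j 1 : ι → K) i)
    (hc' : ∀ i ∉ I, c' i = (Pi.single j' 1 : ι → K) i) :
    ∑ i, b i * c i * c' i = c s * c' s + if j = j' then b j else 0 := by
  rw [← sum_add_sum_compl I, sum_congr rfl fun i hi => by rw [hb i hi],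
    sum_congr (s₁ := Iᶜ) rfl fun i hi => by rw [hc i (mem_compl.1 hi), hc' i (mem_compl.1 hi)]]
  rcases eq_or_ne j j' with rfl | hjj'
  · simp [Pi.single_apply, hs, hj]
  · simp [Pi.single_apply, hs, hjj', hjj'.symm]

theorem IsCoordFrame.exists_single_sub_single_mem [Fintype ι] [DecidableEq ι]
    (hI : IsCoordFrame W I) (hJ : IsCoordFrame W Iᶜ) (hT : IsTrilinearIsotropic W)
    (hsum : ∀ x ∈ W, ∑ i, x i = 0) {s : ι} (hs : s ∈ I) :
    ∃ j ∉ I, Pi.single s 1 - Pi.single j 1 ∈ W := by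
  obtain ⟨b, hbW, hbI⟩ := hI.exists_mem (Pi.single s 1)
  choose c hcW hcJ using fun j => hJ.exists_mem (Pi.single j 1)
  have key : ∀ j ∉ I, ∀ j' ∉ I, c j s * c j' s + (if j = j' then b j else 0) = 0 :=
    fun j hj j' hj' => by
      rw [← sum_mul_mul_eq_of_eq_single hs hj hj' hbI (fun i hi => hcJ j i (mem_compl.2 hi))
        (fun i hi => hcJ j' i (mem_compl.2 hi))]
      exact hT b hbW _ (hcW j) _ (hcW j')
  have hbsum : 1 + ∑ j ∈ Iᶜ, b j = 0 := by
    rw [← hsum b hbW, ← sum_add_sum_compl I, sum_congr rfl fun i hi => hbI i hi]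
    simp [hs]
  obtain ⟨j, hj, hbj⟩ : ∃ j ∈ Iᶜ, b j ≠ 0 := by
    by_contra! h
    rw [sum_eq_zero h] at hbsum
    simp at hbsum
  rw [mem_compl] at hj
  have hcj : c j s ≠ 0 := fun h => hbj (by simpa [h] using key j hj j hj)
  have hb_ne : ∀ j' ∉ I, j' ≠ j → b j' = 0 := fun j' hj' hne => by
    have hcj' : c j' s = 0 := by simpa [hcj, hne.symm] using key j hj j' hj'
    simpa [hcj'] using key j' hj' j' hj'
  have hbj : b j = -1 := by
    rw [sum_eq_single_of_mem j (mem_compl.2 hj) fun j' hj' hne => hb_ne j' (mem_compl.1 hj') hne]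
      at hbsum
    linear_combination hbsum
  refine ⟨j, hj, ?_⟩
  convert hbW using 1
  funext i
  by_cases hi : i ∈ I
  · simp [hbI i hi, Pi.single_apply, ne_of_mem_of_not_mem hi hj]
  · by_cases hij : i = j
    · subst hij; simp [hbj, (ne_of_mem_of_not_mem hs hj).symm]
    · simp [hb_ne i hi hij, hij, (ne_of_mem_of_not_mem hs hi).symm]

theorem add_eq_zero_of_single_sub_single_mem [Fintype ι] [DecidableEq ι]
    (hT : IsTrilinearIsotropic W) {s j : ι} (hsj : s ≠ j) (h : Pi.single s 1 - Pi.single j 1 ∈ W)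
    {x : ι → K} (hx : x ∈ W) : x s + x j = 0 := by
  simpa [Pi.single_apply, sub_mul, mul_sub, sum_sub_distrib, ite_mul, hsj, hsj.symm]
    using hT _ h _ h x hx

theorem exists_eq_pairSubmodule [Fintype ι] [DecidableEq ι]
    (hdim : 2 * finrank K W = Fintype.card ι) (hT : IsTrilinearIsotropic W)
    (hsum : ∀ x ∈ W, ∑ i, x i = 0) :
    ∃ σ : Equiv.Perm ι, Involutive σ ∧ (∀ i, σ i ≠ i) ∧ W = pairSubmodule σ := by
  obtain ⟨I, hI⟩ := exists_isCoordFrame W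
  have hJ := hI.compl hT hdim
  have hpartner : ∀ i, ∃ k, (k ∈ I ↔ i ∉ I) ∧ Pi.single i 1 - Pi.single k 1 ∈ W := by
    intro i
    by_cases hi : i ∈ I
    · obtain ⟨k, hk, hmem⟩ := hI.exists_single_sub_single_mem hJ hT hsum hi
      exact ⟨k, by simp [hk, hi], hmem⟩
    · obtain ⟨k, hk, hmem⟩ :=
        hJ.exists_single_sub_single_mem (by rwa [compl_compl]) hT hsum (mem_compl.2 hi)
      exact ⟨k, by simpa [hi] using hk, hmem⟩
  choose p hpI hpW using hpartner
  have hne : ∀ i, p i ≠ i := fun i h => by simpa [h] using hpI i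
  have hadd : ∀ i, ∀ x ∈ W, x i + x (p i) = 0 := fun i x hx =>
    add_eq_zero_of_single_sub_single_mem hT (hne i).symm (hpW i) hx
  have hp : Involutive p := by
    intro i
    have hW : ∀ x ∈ W, x (p (p i)) = x i := fun x hx => by
      linear_combination hadd (p i) x hx - hadd i x hx
    by_cases hi : i ∈ I
    · exact hI.eq_of_forall_apply_eq (by simp [hpI, hi]) hi hW
    · exact hJ.eq_of_forall_apply_eq (by simp [hpI, hi]) (mem_compl.2 hi) hW
  refine ⟨hp.toPerm p, hp, hne, Submodule.eq_of_le_of_finrank_eq (fun x hx i => hadd i x hx) ?_⟩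
  have := finrank_pairSubmodule (K := K) (σ := hp.toPerm p) hp hne
  omega

theorem forall_sum_eq_zero_and_sum_pow_three_eq_zero_iff [Fintype ι] [DecidableEq ι]
    (h6 : (6 : K) ≠ 0) (hdim : 2 * finrank K W = Fintype.card ι) :
    (∀ x ∈ W, ∑ i, x i = 0 ∧ ∑ i, x i ^ 3 = 0) ↔
      ∃ σ : Equiv.Perm ι, Involutive σ ∧ (∀ i, σ i ≠ i) ∧ W = pairSubmodule σ := by
  have h2 : (2 : K) ≠ 0 := fun h => h6 (by linear_combination 3 * h)
  refine ⟨fun h => exists_eq_pairSubmodule hdim (.of_sum_pow_three h6 fun x hx => (h x hx).2)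
    fun x hx => (h x hx).1, ?_⟩
  rintro ⟨σ, -, -, rfl⟩ x hx
  exact ⟨by simpa using sum_pow_eq_zero_of_mem_pairSubmodule h2 odd_one hx,
    sum_pow_eq_zero_of_mem_pairSubmodule h2 (by decide) hx⟩

end

theorem ncard_fixedPointFree_involutive_fin_six :
    {σ : Equiv.Perm (Fin 6) | Involutive σ ∧ ∀ i, σ i ≠ i}.ncard = 15 := by
  unfold Involutive
  rw [Set.ncard_eq_toFinset_card']
  decide

theorem segre_cubic_fifteen_planes :
    (∀ W : Submodule ℂ (Fin 6 → ℂ), Module.finrank ℂ W = 3 →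
      ((∀ x ∈ W, eval x (e 1) = 0 ∧ eval x (e 3) = 0) ↔
        ∃ σ : Equiv.Perm (Fin 6), (∀ i, σ (σ i) = i) ∧ (∀ i, σ i ≠ i) ∧
          (W : Set (Fin 6 → ℂ)) = {x | ∀ i, x i + x (σ i) = 0})) ∧
    Set.ncard {W : Submodule ℂ (Fin 6 → ℂ) |
      Module.finrank ℂ W = 3 ∧ ∀ x ∈ W, eval x (e 1) = 0 ∧ eval x (e 3) = 0} = 15 := by
  have hplane : ∀ W : Submodule ℂ (Fin 6 → ℂ), finrank ℂ W = 3 →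
      ((∀ x ∈ W, eval x (e 1) = 0 ∧ eval x (e 3) = 0) ↔
        ∃ σ : Equiv.Perm (Fin 6), Involutive σ ∧ (∀ i, σ i ≠ i) ∧ W = pairSubmodule σ) :=
    fun W hW => by
      simp only [e, eval_esymm_one_and_three_eq_zero_iff (by norm_num : (3 : ℂ) ≠ 0)]
      exact forall_sum_eq_zero_and_sum_pow_three_eq_zero_iff (by norm_num) (by simp [hW])
  refine ⟨fun W hW => (hplane W hW).trans ?_, ?_⟩
  · simp_rw [← SetLike.coe_set_eq]
    rfl
  have hplanes : {W : Submodule ℂ (Fin 6 → ℂ) |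
      finrank ℂ W = 3 ∧ ∀ x ∈ W, eval x (e 1) = 0 ∧ eval x (e 3) = 0} =
      pairSubmodule (K := ℂ) '' {σ | Involutive σ ∧ ∀ i, σ i ≠ i} := by
    ext W
    refine ⟨fun ⟨hW, hsW⟩ => ?_, ?_⟩
    · obtain ⟨σ, hσ, hfix, rfl⟩ := (hplane W hW).1 hsW
      exact ⟨σ, ⟨hσ, hfix⟩, rfl⟩
    · rintro ⟨σ, ⟨hσ, hfix⟩, rfl⟩
      have h3 : finrank ℂ (pairSubmodule (K := ℂ) σ) = 3 := by
        have := finrank_pairSubmodule (K := ℂ) hσ hfix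
        simp only [Fintype.card_fin] at this
        omega
      exact ⟨h3, (hplane _ h3).2 ⟨σ, hσ, hfix, rfl⟩⟩
  rw [hplanes, pairSubmodule_injOn.ncard_image, ncard_fixedPointFree_involutive_fin_six]
end
end

section
/- Let R = ℂ[x_0,…,x_5]/(e_1, e_3), with the symmetric group S_6 acting by permuting the variables. Then the invariant subalgebra R^{S_6} is a free polynomial algebra on the images of e_2, e_4, e_5, e_6: these four elements generate R^{S_6} as a ℂ-algebra and are algebraically independent over ℂ. (This is the algebraic form of the statement that the quotient Σ/𝔖_6 of the Segre cubic is the weighted projective space ℙ(2,4,5,6).) -/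
/-!
Let `R = ℂ[x₀,…,x₅]/(e₁, e₃)` with the symmetric group `S₆` permuting the variables.
Then the invariant subalgebra `R^{S₆}` is a free polynomial algebra on the images of
`e₂, e₄, e₅, e₆`: these four elements generate `R^{S₆}` as a `ℂ`-algebra and are
algebraically independent over `ℂ`. (Algebraic form of `Σ/𝔖₆ ≅ ℙ(2,4,5,6)`.)
-/

open MvPolynomial

noncomputable section

/-- The ideal `(e₁, e₃)` of `ℂ[x₀,…,x₅]`. -/
def segreIdeal : Ideal (MvPolynomial (Fin 6) ℂ) :=
  Ideal.span {esymm (Fin 6) ℂ 1, esymm (Fin 6) ℂ 3}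

/-- The coordinate ring `R = ℂ[x₀,…,x₅]/(e₁, e₃)` of the affine cone over the
Segre cubic. -/
abbrev SegreRing : Type := MvPolynomial (Fin 6) ℂ ⧸ segreIdeal

/-- An element `r` of `R` is `S₆`-invariant if, for the action of `S₆` on `R` descended
from permuting the variables, every permutation fixes `r`: for any permutation `π` and
any lift `p` of `r`, the class of `rename π p` is again `r`. -/
def IsS6Invariant (r : SegreRing) : Prop :=
  ∀ (π : Equiv.Perm (Fin 6)) (p : MvPolynomial (Fin 6) ℂ),
    Ideal.Quotient.mk segreIdeal p = r →
      Ideal.Quotient.mk segreIdeal (rename (⇑π) p) = r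

/-- The images in `R` of `e₂, e₄, e₅, e₆`. -/
def eBar : Fin 4 → SegreRing :=
  ![Ideal.Quotient.mk segreIdeal (esymm (Fin 6) ℂ 2),
    Ideal.Quotient.mk segreIdeal (esymm (Fin 6) ℂ 4),
    Ideal.Quotient.mk segreIdeal (esymm (Fin 6) ℂ 5),
    Ideal.Quotient.mk segreIdeal (esymm (Fin 6) ℂ 6)]

/-!
Generation: averaging a lift of an invariant class over `S₆` gives a symmetric polynomial,
hence a polynomial in `e₁, …, e₆`, and modulo `(e₁, e₃)` only `e₂, e₄, e₅, e₆` survive.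

Independence: every `(a₂, a₄, a₅, a₆) ∈ ℂ⁴` is the value of `(e₂, e₄, e₅, e₆)` at a point
where `e₁` and `e₃` vanish (the negated roots of `X⁶ + a₂X⁴ + a₄X² + a₅X + a₆`), so a
polynomial relation among the images would vanish on all of `ℂ⁴`.
-/

lemma Multiset.exists_fin_univ_map_eq {α : Type*} {n : ℕ} {s : Multiset α} (hs : card s = n) :
    ∃ x : Fin n → α, Finset.univ.val.map x = s := by
  obtain ⟨l, rfl⟩ := Quot.exists_rep s
  obtain rfl : l.length = n := hs
  exact ⟨l.get, by rw [Fin.univ_val_map, List.ofFn_get]; rfl⟩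

open Polynomial in
lemma Multiset.exists_card_eq_esymm_eq {K : Type*} [Field K] [IsAlgClosed K] {n : ℕ}
    (c : Fin n → K) : ∃ s : Multiset K, card s = n ∧ ∀ k : Fin n, s.esymm (k + 1) = c k := by
  -- `Q = Xⁿ + c₀ Xⁿ⁻¹ + ⋯ + cₙ₋₁`
  obtain ⟨⟨p, hp⟩, hpc⟩ := (degreeLTEquiv K n).surjective (c ∘ Fin.rev)
  have hpn : p.degree < n := mem_degreeLT.mp hp
  set Q := Polynomial.X ^ n + p
  have hQ : Q.Monic := monic_X_pow_add hpn
  have hQn : Q.natDegree = n := by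
    rw [natDegree_add_eq_left_of_degree_lt (by rwa [degree_X_pow]), natDegree_X_pow]
  have hroots : card Q.roots = n := by
    rw [← hQn, ← splits_iff_card_roots]; exact IsAlgClosed.splits Q
  -- negating the roots turns `∏ (X - r)` into `∏ (X + r)`, whose coefficients carry no signs
  set s := Q.roots.map Neg.neg
  have hs : card s = n := by rw [card_map, hroots]
  have hsQ : (s.map fun r => Polynomial.X + Polynomial.C r).prod = Q := by
    rw [map_map]
    refine (congrArg _ (map_congr rfl fun r _ => ?_)).trans
      (prod_multiset_X_sub_C_of_monic_of_roots_card_eq hQ (hroots.trans hQn.symm))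
    simp only [Function.comp_apply, map_neg, sub_eq_add_neg]
  refine ⟨s, hs, fun k => ?_⟩
  have hk : k.rev.val ≤ card s := by rw [hs]; exact k.rev.is_le'
  calc s.esymm (k + 1) = s.esymm (card s - k.rev) := by rw [hs, Fin.val_rev]; congr 1; omega
    _ = Q.coeff k.rev := by rw [← prod_X_add_C_coeff s hk, hsQ]
    _ = c k := by
      rw [Polynomial.coeff_add, Polynomial.coeff_X_pow, if_neg k.rev.is_lt.ne, zero_add]
      exact (congrFun hpc k.rev).trans (congrArg c k.rev_rev)

namespace MvPolynomial

variable {σ R : Type*}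

lemma span_le_comap_rename [CommSemiring R] {s : Set (MvPolynomial σ R)}
    (hs : ∀ f ∈ s, f.IsSymmetric) (π : Equiv.Perm σ) :
    Ideal.span s ≤ (Ideal.span s).comap (rename π) :=
  Ideal.span_le.mpr fun f hf => by simpa [hs f hf π] using Ideal.subset_span hf

lemma isSymmetric_sum_rename [Fintype σ] [DecidableEq σ] [CommSemiring R]
    (p : MvPolynomial σ R) : (∑ π : Equiv.Perm σ, rename π p).IsSymmetric := by
  intro τ
  rw [map_sum]
  exact Fintype.sum_bijective (τ * ·) (Group.mulLeft_bijective τ) _ _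
    fun π => by rw [rename_rename, Equiv.Perm.coe_mul]

lemma exists_isSymmetric_map_eq [Fintype σ] [DecidableEq σ] {K A : Type*} [Field K] [CharZero K]
    [AddCommMonoid A] [Module K A] (f : MvPolynomial σ K →ₗ[K] A) {p : MvPolynomial σ K}
    (hp : ∀ π : Equiv.Perm σ, f (rename (⇑π) p) = f p) :
    ∃ q : MvPolynomial σ K, q.IsSymmetric ∧ f q = f p := by
  have hcard : (Fintype.card (Equiv.Perm σ) : K) ≠ 0 := Nat.cast_ne_zero.mpr Fintype.card_ne_zero
  refine ⟨(Fintype.card (Equiv.Perm σ) : K)⁻¹ • ∑ π : Equiv.Perm σ, rename (⇑π) p,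
    fun τ => by rw [map_smul, isSymmetric_sum_rename p τ], ?_⟩
  rw [map_smul, map_sum, Finset.sum_congr rfl fun π _ => hp π, Finset.sum_const, Finset.card_univ,
    ← Nat.cast_smul_eq_nsmul K, smul_smul, inv_mul_cancel₀ hcard, one_smul]

lemma IsSymmetric.map_mem_adjoin_esymm [Fintype σ] [CommRing R] {A : Type*} [CommSemiring A]
    [Algebra R A] (f : MvPolynomial σ R →ₐ[R] A) {p : MvPolynomial σ R} (hp : p.IsSymmetric) :
    f p ∈ Algebra.adjoin R (Set.range fun k : Fin (Fintype.card σ) => f (esymm σ R (k + 1))) := by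
  obtain ⟨F, hF⟩ := esymmAlgHom_surjective R le_rfl ⟨p, hp⟩
  have hFp : aeval (fun k : Fin _ => esymm σ R (k + 1)) F = p := by rw [← esymmAlgHom_apply, hF]
  rw [← aeval_range, ← hFp, comp_aeval_apply]
  exact AlgHom.mem_range_self _ F

lemma algebraicIndependent_mk_comp_of_forall_exists_eval {ι K : Type*} [Field K] [Infinite K]
    (I : Ideal (MvPolynomial σ K)) (E : ι → MvPolynomial σ K)
    (hE : ∀ a : ι → K, ∃ x : σ → K, I ≤ RingHom.ker (eval x) ∧ ∀ i, eval x (E i) = a i) :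
    AlgebraicIndependent K (Ideal.Quotient.mk I ∘ E) := by
  refine algebraicIndependent_iff.mpr fun P hP => funext fun a => ?_
  have hPI : aeval E P ∈ I := by
    rwa [← Ideal.Quotient.eq_zero_iff_mem, ← Ideal.Quotient.mkₐ_eq_mk K, comp_aeval_apply]
  obtain ⟨x, hxI, hxE⟩ := hE a
  calc eval a P = eval (fun i => eval x (E i)) P := by simp_rw [hxE]
    _ = eval x (aeval E P) := (comp_aeval_apply (f := E) (aeval x) P).symm
    _ = eval a 0 := by rw [map_zero]; exact hxI hPI

lemma exists_eval_esymm_eq {K : Type*} [Field K] [IsAlgClosed K] {n : ℕ}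
    (c : Fin n → K) : ∃ x : Fin n → K, ∀ k : Fin n, eval x (esymm (Fin n) K (k + 1)) = c k := by
  obtain ⟨s, hs, hsc⟩ := Multiset.exists_card_eq_esymm_eq c
  obtain ⟨x, rfl⟩ := Multiset.exists_fin_univ_map_eq hs
  exact ⟨x, fun k => (aeval_esymm_eq_multiset_esymm (Fin n) K _ x).trans (hsc k)⟩

end MvPolynomial

def segreGens : Fin 4 → MvPolynomial (Fin 6) ℂ :=
  ![esymm (Fin 6) ℂ 2, esymm (Fin 6) ℂ 4, esymm (Fin 6) ℂ 5, esymm (Fin 6) ℂ 6]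

lemma eBar_eq_mk_comp_segreGens : eBar = Ideal.Quotient.mk segreIdeal ∘ segreGens := by
  funext i
  fin_cases i <;> rfl

lemma isSymmetric_segreGens (i : Fin 4) : (segreGens i).IsSymmetric := by
  fin_cases i
  exacts [esymm_isSymmetric (Fin 6) ℂ 2, esymm_isSymmetric (Fin 6) ℂ 4,
    esymm_isSymmetric (Fin 6) ℂ 5, esymm_isSymmetric (Fin 6) ℂ 6]

lemma segreIdeal_le_comap_rename (π : Equiv.Perm (Fin 6)) :
    segreIdeal ≤ segreIdeal.comap (rename π) :=
  span_le_comap_rename (by rintro f (rfl | rfl) <;> exact esymm_isSymmetric _ _ _) π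

def segrePerm (π : Equiv.Perm (Fin 6)) : SegreRing →ₐ[ℂ] SegreRing :=
  Ideal.quotientMapₐ segreIdeal (rename π) (segreIdeal_le_comap_rename π)

lemma isS6Invariant_of_mem_adjoin_eBar {r : SegreRing}
    (hr : r ∈ Algebra.adjoin ℂ (Set.range eBar)) : IsS6Invariant r := by
  rintro π p rfl
  have hfix : Algebra.adjoin ℂ (Set.range eBar) ≤ AlgHom.equalizer (segrePerm π) (AlgHom.id ℂ _) :=
    Algebra.adjoin_le <| Set.range_subset_iff.mpr fun i => by
      rw [eBar_eq_mk_comp_segreGens]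
      exact congrArg (Ideal.Quotient.mk segreIdeal) (isSymmetric_segreGens i π)
  exact hfix hr

lemma mk_esymm_mem_adjoin_eBar (k : Fin 6) :
    Ideal.Quotient.mkₐ ℂ segreIdeal (esymm (Fin 6) ℂ (k + 1)) ∈
      Algebra.adjoin ℂ (Set.range eBar) := by
  have hvanish : ∀ j, j = 1 ∨ j = 3 → Ideal.Quotient.mkₐ ℂ segreIdeal (esymm (Fin 6) ℂ j) = 0 :=
    fun j hj => Ideal.Quotient.eq_zero_iff_mem.mpr
      (Ideal.subset_span (by rcases hj with rfl | rfl <;> simp))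
  fin_cases k
  · exact hvanish 1 (.inl rfl) ▸ zero_mem _
  · exact Algebra.subset_adjoin ⟨0, rfl⟩
  · exact hvanish 3 (.inr rfl) ▸ zero_mem _
  · exact Algebra.subset_adjoin ⟨1, rfl⟩
  · exact Algebra.subset_adjoin ⟨2, rfl⟩
  · exact Algebra.subset_adjoin ⟨3, rfl⟩

lemma mem_adjoin_eBar_of_isS6Invariant {r : SegreRing} (hr : IsS6Invariant r) :
    r ∈ Algebra.adjoin ℂ (Set.range eBar) := by
  obtain ⟨p, rfl⟩ := Ideal.Quotient.mk_surjective r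
  obtain ⟨q, hq, hqp⟩ :=
    exists_isSymmetric_map_eq (Ideal.Quotient.mkₐ ℂ segreIdeal).toLinearMap fun π => hr π p rfl
  rw [← Ideal.Quotient.mkₐ_eq_mk ℂ]
  exact hqp ▸ Algebra.adjoin_le (Set.range_subset_iff.mpr mk_esymm_mem_adjoin_eBar)
    (hq.map_mem_adjoin_esymm (Ideal.Quotient.mkₐ ℂ segreIdeal))

lemma exists_eval_segreGens_eq (a : Fin 4 → ℂ) :
    ∃ x : Fin 6 → ℂ, segreIdeal ≤ RingHom.ker (eval x) ∧ ∀ i, eval x (segreGens i) = a i := by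
  obtain ⟨x, hx⟩ := exists_eval_esymm_eq ![0, a 0, 0, a 1, a 2, a 3]
  refine ⟨x, Ideal.span_le.mpr ?_, fun i => ?_⟩
  · rintro f (rfl | rfl)
    exacts [hx 0, hx 2]
  · fin_cases i
    exacts [hx 1, hx 3, hx 4, hx 5]

/-- `R^{S₆}` is the free polynomial algebra `ℂ[e₂, e₄, e₅, e₆]`. -/
theorem segre_invariants_free_polynomial_algebra :
    (∀ r : SegreRing, IsS6Invariant r ↔
      r ∈ Algebra.adjoin ℂ (Set.range eBar)) ∧
    AlgebraicIndependent ℂ eBar :=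
  ⟨fun _ => ⟨mem_adjoin_eBar_of_isS6Invariant, isS6Invariant_of_mem_adjoin_eBar⟩,
    eBar_eq_mk_comp_segreGens ▸
      algebraicIndependent_mk_comp_of_forall_exists_eval _ _ exists_eval_segreGens_eq⟩
end
end
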